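/- arXiv:1006.0619 — 7 statements merged into one kernel-verified Lean document; each statement's English description precedes it below -/
import Mathlib

section
/- Let λ, μ, g0 ≥ 0 and let 0 < p_{j+1} < p_j; set a = λ + μ·g0 and Δ = p_j − p_{j+1}. If p_j − p_{j+1}·e^{aΔ} > 0, then g1* = (e^{aΔ} − 1)/(p_j − p_{j+1}·e^{aΔ}) is nonnegative and is the unique g1 ≥ 0 satisfying log(1 + g1·p_j) − a·p_j = log(1 + g1·p_{j+1}) − a·p_{j+1}. -/
open Real

/-! Equality of the two Lagrangians says `log ((1 + g₁ p_j) / (1 + g₁ p_{j+1})) = a Δ`, i.e.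
`1 + g₁ p_j = e^{aΔ} (1 + g₁ p_{j+1})`, which is linear in `g₁` with the unique solution `g₁*`.
It is nonnegative because `aΔ ≥ 0` gives `e^{aΔ} ≥ 1`. -/

theorem log_one_add_mul_sub_mul_eq_iff {g a x y : ℝ} (hx : 0 < 1 + g * x) (hy : 0 < 1 + g * y) :
    log (1 + g * x) - a * x = log (1 + g * y) - a * y ↔
      1 + g * x = exp (a * (x - y)) * (1 + g * y) := by
  have hrhs : log (exp (a * (x - y)) * (1 + g * y)) = a * (x - y) + log (1 + g * y) := by
    rw [log_mul (exp_ne_zero _) hy.ne', log_exp]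
  rw [← log_injOn_pos.eq_iff hx (mul_pos (exp_pos _) hy), hrhs]
  constructor <;> intro h <;> linarith

theorem one_add_mul_eq_mul_one_add_mul_iff {g E x y : ℝ} (h : x - y * E ≠ 0) :
    1 + g * x = E * (1 + g * y) ↔ g = (E - 1) / (x - y * E) := by
  rw [eq_div_iff h]
  constructor <;> intro h <;> linarith

/-- The boundary value `g1* = (e^{aΔ} - 1)/(p_j - p_{j+1} e^{aΔ})` (with
`a = λ + μ g0`, `Δ = p_j - p_{j+1}`) is the unique nonnegative channel gain at which
the per-realization Lagrangians of two adjacent power levels coincide. -/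
theorem adjacent_region_boundary_unique
    (lam mu g0 : ℝ) (hlam : 0 ≤ lam) (hmu : 0 ≤ mu) (hg0 : 0 ≤ g0)
    (pj pj1 : ℝ) (hpj1 : 0 < pj1) (hlt : pj1 < pj)
    (a Δ : ℝ) (ha : a = lam + mu * g0) (hΔ : Δ = pj - pj1)
    (hden : 0 < pj - pj1 * Real.exp (a * Δ)) :
    0 ≤ (Real.exp (a * Δ) - 1) / (pj - pj1 * Real.exp (a * Δ)) ∧
    (Real.log (1 + ((Real.exp (a * Δ) - 1) / (pj - pj1 * Real.exp (a * Δ))) * pj) - a * pj =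
      Real.log (1 + ((Real.exp (a * Δ) - 1) / (pj - pj1 * Real.exp (a * Δ))) * pj1) - a * pj1) ∧
    ∀ g1 : ℝ, 0 ≤ g1 →
      Real.log (1 + g1 * pj) - a * pj = Real.log (1 + g1 * pj1) - a * pj1 →
      g1 = (Real.exp (a * Δ) - 1) / (pj - pj1 * Real.exp (a * Δ)) := by
  have hexp : 1 ≤ exp (a * Δ) :=
    one_le_exp (mul_nonneg (by rw [ha]; positivity) (by rw [hΔ]; linarith))
  have hstar : 0 ≤ (exp (a * Δ) - 1) / (pj - pj1 * exp (a * Δ)) :=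
    div_nonneg (sub_nonneg.2 hexp) hden.le
  have hboundary : ∀ g1 : ℝ, 0 ≤ g1 →
      (log (1 + g1 * pj) - a * pj = log (1 + g1 * pj1) - a * pj1 ↔
        g1 = (exp (a * Δ) - 1) / (pj - pj1 * exp (a * Δ))) := fun g1 hg1 => by
    rw [log_one_add_mul_sub_mul_eq_iff (by nlinarith) (by nlinarith), ← hΔ,
      one_add_mul_eq_mul_one_add_mul_iff hden.ne']
  exact ⟨hstar, (hboundary _ hstar).2 rfl, fun g1 hg1 => (hboundary g1 hg1).1⟩
end

section
/- Let λ ≥ 0, μ > 0, and 0 < q < p with Δ = p − q. Define h(g0) = (e^{(λ+μ·g0)Δ} − 1)/(p − q·e^{(λ+μ·g0)Δ}) on the domain D = {g0 ≥ 0 : (λ + μ·g0)·Δ < log(p/q)} (on which the denominator p − q·e^{(λ+μ·g0)Δ} is positive). Then h is strictly increasing on D and h is a convex function on D. -/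
/-!
The curve is `φ ∘ exp ∘ ℓ` with `ℓ g0 = (λ + μ g0)(p - q)` increasing and affine and
`φ y = (y - 1)/(p - q y) = (p - q)/q · (p - q y)⁻¹ - 1/q`, which is increasing and convex on
`q y < p`; the domain condition says exactly that `exp ∘ ℓ` lands there. Composing increasing
convex functions with convex ones preserves convexity.
-/

open Real Set

theorem ConvexOn.comp_of_mapsTo {𝕜 E β γ : Type*} [Semiring 𝕜] [PartialOrder 𝕜]
    [AddCommMonoid E] [AddCommMonoid β] [PartialOrder β] [AddCommMonoid γ] [PartialOrder γ]
    [SMul 𝕜 E] [SMul 𝕜 β] [SMul 𝕜 γ] {s : Set E} {t : Set β} {f : E → β} {g : β → γ}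
    (hg : ConvexOn 𝕜 t g) (hf : ConvexOn 𝕜 s f) (hg' : MonotoneOn g t) (hst : MapsTo f s t) :
    ConvexOn 𝕜 s (g ∘ f) :=
  ⟨hf.1, fun _ hx _ hy _ _ ha hb hab =>
    (hg' (hst (hf.1 hx hy ha hb hab)) (hg.1 (hst hx) (hst hy) ha hb hab)
      (hf.2 hx hy ha hb hab)).trans (hg.2 (hst hx) (hst hy) ha hb hab)⟩

theorem convexOn_inv_sub_mul (p q : ℝ) : ConvexOn ℝ {y | q * y < p} fun y => (p - q * y)⁻¹ := by
  let g : ℝ →ᵃ[ℝ] ℝ := AffineMap.const ℝ ℝ p - q • AffineMap.id ℝ ℝ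
  have hg : ∀ y, g y = p - q * y := fun y => by simp [g]
  have hs : {y | q * y < p} = g ⁻¹' Ioi 0 := by ext y; simp [hg]
  rw [hs]
  exact ((convexOn_zpow (-1)).comp_affineMap g).congr fun y _ => by simp [hg]

theorem sub_one_div_sub_mul_eq {p q y : ℝ} (hq : q ≠ 0) (hy : q * y ≠ p) :
    (y - 1) / (p - q * y) = (p - q) / q * (p - q * y)⁻¹ - 1 / q := by
  obtain ⟨u, hu, rfl⟩ : ∃ u, u ≠ 0 ∧ p = u + q * y := ⟨p - q * y, sub_ne_zero.2 hy.symm, by ring⟩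
  rw [add_sub_cancel_right]
  field_simp
  ring

theorem convexOn_sub_one_div_sub_mul {p q : ℝ} (hq : 0 < q) (hqp : q ≤ p) :
    ConvexOn ℝ {y | q * y < p} fun y => (y - 1) / (p - q * y) := by
  refine (((convexOn_inv_sub_mul p q).smul (div_nonneg (sub_nonneg.2 hqp) hq.le)).add_const
    (-(1 / q))).congr fun y hy => ?_
  rw [sub_one_div_sub_mul_eq hq.ne' hy.ne, Pi.add_apply, smul_eq_mul, ← sub_eq_add_neg]

theorem strictMonoOn_sub_one_div_sub_mul {p q : ℝ} (hqp : q < p) :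
    StrictMonoOn (fun y => (y - 1) / (p - q * y)) {y | q * y < p} := by
  intro x (hx : q * x < p) y (hy : q * y < p) hxy
  rw [div_lt_div_iff₀ (sub_pos.2 hx) (sub_pos.2 hy)]
  nlinarith [mul_pos (sub_pos.2 hqp) (sub_pos.2 hxy)]

theorem boundary_strictMono_convex_general
    (lam mu p q : ℝ) (hmu : 0 < mu)
    (hq : 0 < q) (hqp : q < p) :
    StrictMonoOn
      (fun g0 : ℝ => (Real.exp ((lam + mu * g0) * (p - q)) - 1) /
        (p - q * Real.exp ((lam + mu * g0) * (p - q))))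
      {g0 : ℝ | 0 ≤ g0 ∧ (lam + mu * g0) * (p - q) < Real.log (p / q)} ∧
    ConvexOn ℝ {g0 : ℝ | 0 ≤ g0 ∧ (lam + mu * g0) * (p - q) < Real.log (p / q)}
      (fun g0 : ℝ => (Real.exp ((lam + mu * g0) * (p - q)) - 1) /
        (p - q * Real.exp ((lam + mu * g0) * (p - q)))) := by
  let ℓ : ℝ → ℝ := fun g0 => (lam + mu * g0) * (p - q)
  have hℓ_mono : StrictMono ℓ := fun x y hxy =>
    mul_lt_mul_of_pos_right (by gcongr) (sub_pos.2 hqp)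
  have hℓ_convex : ConvexOn ℝ (Ici 0) ℓ :=
    ⟨convex_Ici 0, fun x _ y _ a b _ _ hab => le_of_eq <| by
      simp only [ℓ, smul_eq_mul]; linear_combination -lam * (p - q) * hab⟩
  have hD : Convex ℝ {g0 | 0 ≤ g0 ∧ ℓ g0 < log (p / q)} := hℓ_convex.convex_lt _
  have hmaps : MapsTo (exp ∘ ℓ) {g0 | 0 ≤ g0 ∧ ℓ g0 < log (p / q)} {y | q * y < p} :=
    fun x hx => by
      have := exp_lt_exp.2 hx.2
      rwa [exp_log (div_pos (hq.trans hqp) hq), lt_div_iff₀ hq, mul_comm] at this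
  have hE_convex : ConvexOn ℝ {g0 | 0 ≤ g0 ∧ ℓ g0 < log (p / q)} (exp ∘ ℓ) :=
    convexOn_exp.comp_of_mapsTo (hℓ_convex.subset (fun _ hx => hx.1) hD)
      (exp_monotone.monotoneOn _) (mapsTo_univ _ _)
  exact ⟨(strictMonoOn_sub_one_div_sub_mul hqp).comp
      ((exp_strictMono.comp hℓ_mono).strictMonoOn _) hmaps,
    (convexOn_sub_one_div_sub_mul hq hqp.le).comp_of_mapsTo hE_convex
      (strictMonoOn_sub_one_div_sub_mul hqp).monotoneOn hmaps⟩

/-- The boundary curve `h(g0) = (e^{(λ+μg0)Δ} - 1)/(p - q e^{(λ+μg0)Δ})` between the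
quantization regions of two adjacent power levels `p > q > 0` is strictly increasing
and convex on the domain where its denominator is positive. -/
theorem boundary_strictMono_convex
    (lam mu p q : ℝ) (hlam : 0 ≤ lam) (hmu : 0 < mu)
    (hq : 0 < q) (hqp : q < p) :
    StrictMonoOn
      (fun g0 : ℝ => (Real.exp ((lam + mu * g0) * (p - q)) - 1) /
        (p - q * Real.exp ((lam + mu * g0) * (p - q))))
      {g0 : ℝ | 0 ≤ g0 ∧ (lam + mu * g0) * (p - q) < Real.log (p / q)} ∧
    ConvexOn ℝ {g0 : ℝ | 0 ≤ g0 ∧ (lam + mu * g0) * (p - q) < Real.log (p / q)}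
      (fun g0 : ℝ => (Real.exp ((lam + mu * g0) * (p - q)) - 1) /
        (p - q * Real.exp ((lam + mu * g0) * (p - q)))) :=
  boundary_strictMono_convex_general lam mu p q hmu hq hqp
end

section
/- For all real numbers a > 0 and 0 < q < p, one has e^{a·p} − e^{a·q} > a·(p·e^{a·q} − q·e^{a·p}). Consequently, if additionally p·e^{a·q} − q·e^{a·p} > 0, then (e^{a·p} − e^{a·q})/(p·e^{a·q} − q·e^{a·p}) > a. -/
open Real

/-- Mean-value-theorem inequality: for `a > 0` and `0 < q < p`,
`e^{ap} - e^{aq} > a (p e^{aq} - q e^{ap})`; hence, whenever the denominator is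
positive, the boundary value `(e^{ap} - e^{aq})/(p e^{aq} - q e^{ap})` exceeds `a`. -/
theorem boundary_exceeds_a (a p q : ℝ) (ha : 0 < a) (hq : 0 < q) (hqp : q < p) :
    a * (p * Real.exp (a * q) - q * Real.exp (a * p)) < Real.exp (a * p) - Real.exp (a * q) ∧
    (0 < p * Real.exp (a * q) - q * Real.exp (a * p) →
      a < (Real.exp (a * p) - Real.exp (a * q)) /
        (p * Real.exp (a * q) - q * Real.exp (a * p))) := by
  have h1 : Real.exp (a * p) = Real.exp (a * q) * Real.exp (a * (p - q)) := by
    rw [← Real.exp_add]; ring_nf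
  have h2 : a * (p - q) + 1 < Real.exp (a * (p - q)) :=
    Real.add_one_lt_exp (mul_pos ha (sub_pos.mpr hqp)).ne'
  have h3 := Real.exp_pos (a * q)
  have hmain : a * (p * Real.exp (a * q) - q * Real.exp (a * p)) <
      Real.exp (a * p) - Real.exp (a * q) := by
    have key : (a * (p - q) + 1) * (1 + a * q) < Real.exp (a * (p - q)) * (1 + a * q) := by
      apply mul_lt_mul_of_pos_right h2; nlinarith
    rw [h1]
    nlinarith [mul_lt_mul_of_pos_left key h3,
      mul_pos h3 (mul_pos (mul_pos ha hq) (mul_pos ha (sub_pos.mpr hqp)))]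
  exact ⟨hmain, fun hd => (lt_div_iff₀ hd).mpr (by linarith)⟩
end

section
/- Let a > 0 and 0 < q < p be real numbers with q·e^{a(p−q)} < p, and set g_b = (e^{a(p−q)} − 1)/(p − q·e^{a(p−q)}). Then for every g1 ≥ 0: log(1 + g1·p) − a·p ≥ log(1 + g1·q) − a·q if and only if g1 ≥ g_b. -/
open Real

theorem le_log_sub_log_iff_exp_le_div {c x y : ℝ} (hx : 0 < x) (hy : 0 < y) :
    c ≤ log x - log y ↔ exp c ≤ x / y := by
  rw [← log_div hx.ne' hy.ne', le_log_iff_exp_le (div_pos hx hy)]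

theorem le_one_add_mul_div_one_add_mul_iff {E p q g : ℝ} (hq : 0 < 1 + g * q)
    (hd : 0 < p - q * E) :
    E ≤ (1 + g * p) / (1 + g * q) ↔ (E - 1) / (p - q * E) ≤ g := by
  rw [le_div_iff₀ hq, div_le_iff₀ hd]
  constructor <;> intro h <;> linarith

theorem nearest_neighbor_halfline_general (a p q : ℝ) (hq : 0 < q)
    (hden : q * Real.exp (a * (p - q)) < p) :
    ∀ g1 : ℝ, 0 ≤ g1 →
      (Real.log (1 + g1 * q) - a * q ≤ Real.log (1 + g1 * p) - a * p ↔
        (Real.exp (a * (p - q)) - 1) / (p - q * Real.exp (a * (p - q))) ≤ g1) := by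
  intro g1 hg1
  have hp : 0 < p := (mul_pos hq (exp_pos _)).trans hden
  have hq1 : 0 < 1 + g1 * q := by positivity
  have hp1 : 0 < 1 + g1 * p := by positivity
  calc _ ↔ a * (p - q) ≤ log (1 + g1 * p) - log (1 + g1 * q) := by
          constructor <;> intro h <;> linarith
    _ ↔ exp (a * (p - q)) ≤ (1 + g1 * p) / (1 + g1 * q) := le_log_sub_log_iff_exp_le_div hp1 hq1
    _ ↔ _ := le_one_add_mul_div_one_add_mul_iff hq1 (sub_pos.2 hden)

/-- Nearest-neighbor structure: for power levels `p > q > 0` and `a > 0` with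
`q e^{a(p-q)} < p`, the channel gains `g1 ≥ 0` preferring the larger power level `p`
(in the per-realization Lagrangian sense) are exactly those above the boundary value
`g_b = (e^{a(p-q)} - 1)/(p - q e^{a(p-q)})`. -/
theorem nearest_neighbor_halfline (a p q : ℝ) (ha : 0 < a) (hq : 0 < q) (hqp : q < p)
    (hden : q * Real.exp (a * (p - q)) < p) :
    ∀ g1 : ℝ, 0 ≤ g1 →
      (Real.log (1 + g1 * q) - a * q ≤ Real.log (1 + g1 * p) - a * p ↔
        (Real.exp (a * (p - q)) - 1) / (p - q * Real.exp (a * (p - q))) ≤ g1) :=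
  nearest_neighbor_halfline_general a p q hq hden
end

section
/- Let ν be a finite measure on ℝ≥0 × ℝ≥0 with coordinates (g0, g1), let λ, μ ≥ 0, and assume g1 and g0 are ν-integrable. If ∫ g1 dν > ∫ (λ + μ·g0) dν, then there exists p > 0 such that ∫ (log(1 + g1·p) − (λ + μ·g0)·p) dν > 0; that is, the maximizer over p ≥ 0 of the integrated per-region Lagrangian is strictly positive. -/
/-!
The Lagrangian `F p = ∫ (log (1 + g₁ p) - (λ + μ g₀) p) dν` vanishes at `p = 0`, and its right
derivative there is `∫ g₁ dν - ∫ (λ + μ g₀) dν > 0`. Concretely, `log (1 + g₁ p) / p → g₁` as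
`p → 0⁺` with `|log (1 + g₁ p) / p| ≤ g₁`, so dominated convergence gives
`(∫ log (1 + g₁ p) dν) / p → ∫ g₁ dν`, and for small `p > 0` this exceeds `∫ (λ + μ g₀) dν`.
-/

open MeasureTheory Real Filter Topology
open scoped NNReal

theorem Real.tendsto_log_one_add_mul_div_nhdsGT (a : ℝ) :
    Tendsto (fun p => log (1 + a * p) / p) (𝓝[>] 0) (𝓝 a) := by
  have hderiv : HasDerivAt (fun p => log (1 + a * p)) a 0 := by
    simpa using ((hasDerivAt_id (0 : ℝ)).const_mul a).const_add 1 |>.log (by simp)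
  simpa [div_eq_inv_mul] using hderiv.tendsto_slope_zero_right

theorem Real.log_one_add_mul_le {a p : ℝ} (ha : 0 ≤ a) (hp : 0 ≤ p) :
    log (1 + a * p) ≤ a * p := by
  linarith [log_le_sub_one_of_pos (by positivity : 0 < 1 + a * p)]

theorem Real.abs_log_one_add_mul_div_le {a p : ℝ} (ha : 0 ≤ a) (hp : 0 < p) :
    |log (1 + a * p) / p| ≤ a := by
  have hlog : 0 ≤ log (1 + a * p) := log_nonneg (by nlinarith)
  rw [abs_of_nonneg (by positivity), div_le_iff₀ hp]
  exact log_one_add_mul_le ha hp.le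

section

variable {α : Type*} [MeasurableSpace α] {ν : Measure α} {g : α → ℝ}

theorem integrable_log_one_add_mul (hg : Integrable g ν) (hg_nonneg : ∀ᵐ x ∂ν, 0 ≤ g x)
    {p : ℝ} (hp : 0 ≤ p) : Integrable (fun x => log (1 + g x * p)) ν := by
  have hmeas : AEMeasurable (fun x => log (1 + g x * p)) ν :=
    measurable_log.comp_aemeasurable ((hg.aemeasurable.mul_const p).const_add 1)
  refine (hg.mul_const p).mono' hmeas.aestronglyMeasurable ?_
  filter_upwards [hg_nonneg] with x hx
  have hlog : 0 ≤ log (1 + g x * p) := log_nonneg (by nlinarith)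
  rw [norm_of_nonneg hlog]
  exact log_one_add_mul_le hx hp

theorem tendsto_integral_log_one_add_mul_div (hg : Integrable g ν)
    (hg_nonneg : ∀ᵐ x ∂ν, 0 ≤ g x) :
    Tendsto (fun p => ∫ x, log (1 + g x * p) / p ∂ν) (𝓝[>] 0) (𝓝 (∫ x, g x ∂ν)) := by
  refine tendsto_integral_filter_of_dominated_convergence g ?_ ?_ hg ?_
  · filter_upwards [self_mem_nhdsWithin] with p (hp : 0 < p)
    exact ((integrable_log_one_add_mul hg hg_nonneg hp.le).div_const p).aestronglyMeasurable
  · filter_upwards [self_mem_nhdsWithin] with p (hp : 0 < p)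
    filter_upwards [hg_nonneg] with x hx
    exact abs_log_one_add_mul_div_le hx hp
  · exact ae_of_all _ fun x => tendsto_log_one_add_mul_div_nhdsGT (g x)

theorem exists_pos_integral_log_one_add_mul_sub_pos (hg : Integrable g ν)
    (hg_nonneg : ∀ᵐ x ∂ν, 0 ≤ g x) {c : α → ℝ} (hc : Integrable c ν)
    (h : ∫ x, c x ∂ν < ∫ x, g x ∂ν) :
    ∃ p : ℝ, 0 < p ∧ 0 < ∫ x, (log (1 + g x * p) - c x * p) ∂ν := by
  obtain ⟨p, hslope, hp⟩ := ((tendsto_integral_log_one_add_mul_div hg hg_nonneg).eventually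
    (eventually_gt_nhds h)).and self_mem_nhdsWithin |>.exists
  rw [integral_div, lt_div_iff₀ hp] at hslope
  refine ⟨p, hp, ?_⟩
  rw [integral_sub (integrable_log_one_add_mul hg hg_nonneg hp.le) (hc.mul_const p),
    integral_mul_const]
  linarith

end

theorem positive_power_optimal_general
    (ν : Measure (ℝ≥0 × ℝ≥0)) [IsFiniteMeasure ν]
    (lam mu : ℝ)
    (hg1 : Integrable (fun x => (x.2 : ℝ)) ν)
    (hg0 : Integrable (fun x => (x.1 : ℝ)) ν)
    (h : ∫ x, (lam + mu * (x.1 : ℝ)) ∂ν < ∫ x, (x.2 : ℝ) ∂ν) :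
    ∃ p : ℝ, 0 < p ∧
      0 < ∫ x, (Real.log (1 + (x.2 : ℝ) * p) - (lam + mu * (x.1 : ℝ)) * p) ∂ν :=
  exists_pos_integral_log_one_add_mul_sub_pos hg1 (ae_of_all _ fun x => x.2.coe_nonneg)
    ((integrable_const lam).add (hg0.const_mul mu)) h

/-- Centroid condition, nondegenerate case: if the per-region mean of `g1` strictly
exceeds that of `λ + μ g0`, then some strictly positive power level achieves a
strictly positive integrated per-region Lagrangian, so the maximizer over `p ≥ 0`
is strictly positive. -/
theorem positive_power_optimal
    (ν : Measure (ℝ≥0 × ℝ≥0)) [IsFiniteMeasure ν]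
    (lam mu : ℝ) (hlam : 0 ≤ lam) (hmu : 0 ≤ mu)
    (hg1 : Integrable (fun x => (x.2 : ℝ)) ν)
    (hg0 : Integrable (fun x => (x.1 : ℝ)) ν)
    (h : ∫ x, (lam + mu * (x.1 : ℝ)) ∂ν < ∫ x, (x.2 : ℝ) ∂ν) :
    ∃ p : ℝ, 0 < p ∧
      0 < ∫ x, (Real.log (1 + (x.2 : ℝ) * p) - (lam + mu * (x.1 : ℝ)) * p) ∂ν :=
  positive_power_optimal_general ν lam mu hg1 hg0 h
end

section
/- Let P be a probability measure on ℝ≥0 × ℝ≥0 with coordinates (g0, g1) such that ∫ g0 dP = 1, ∫ g1 dP = 1, and P({g1 > 0}) > 0. Let R_1, …, R_L be pairwise disjoint measurable sets covering P-almost all of ℝ≥0 × ℝ≥0, let λ, μ ≥ 0, and let p_1, …, p_L > 0 satisfy ∫_{R_j} g1/(1 + g1·p_j) dP = ∫_{R_j} (λ + μ·g0) dP for every j = 1, …, L. Then λ + μ < 1. -/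
/-!
Summing the centroid equations over the regions gives
`λ + μ = ∑ⱼ ∫_{Rⱼ} g₁ / (1 + g₁ pⱼ) dP`, because the regions partition the space up to a null set
and `g₀` has unit mean. Since every `pⱼ > 0`, the integrand is at most `g₁`, strictly where
`g₁ > 0`; that set meets some region in positive measure, so the sum is strictly less than
`∑ⱼ ∫_{Rⱼ} g₁ dP = E[g₁] = 1`.
-/

open MeasureTheory
open scoped NNReal

theorem div_one_add_mul_le_self {g p : ℝ} (hg : 0 ≤ g) (hp : 0 ≤ p) :
    g / (1 + g * p) ≤ g :=
  div_le_self hg (le_add_of_nonneg_right (mul_nonneg hg hp))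

theorem div_one_add_mul_lt_self {g p : ℝ} (hg : 0 < g) (hp : 0 < p) :
    g / (1 + g * p) < g :=
  div_lt_self hg (lt_add_of_pos_right 1 (mul_pos hg hp))

namespace MeasureTheory

variable {α ι : Type*} [MeasurableSpace α] {μ : Measure α}

theorem sum_setIntegral_eq_integral_of_measure_compl_iUnion_eq_zero [Fintype ι]
    {s : ι → Set α} {f : α → ℝ} (hs : ∀ i, MeasurableSet (s i))
    (hd : Pairwise (Function.onFun Disjoint s)) (hcov : μ (⋃ i, s i)ᶜ = 0)
    (hf : Integrable f μ) :
    ∑ i, ∫ x in s i, f x ∂μ = ∫ x, f x ∂μ := by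
  rw [← integral_iUnion_fintype hs hd fun i => hf.integrableOn,
    setIntegral_congr_set (ae_eq_univ.2 hcov), setIntegral_univ]

theorem exists_measure_inter_ne_zero_of_measure_compl_iUnion_eq_zero [Countable ι]
    {s : ι → Set α} {t : Set α} (hcov : μ (⋃ i, s i)ᶜ = 0) (ht : μ t ≠ 0) :
    ∃ i, μ (t ∩ s i) ≠ 0 := by
  by_contra! h
  refine ht (measure_mono_null ?_ (measure_union_null (measure_iUnion_null h) hcov))
  intro x hx
  by_cases hxs : x ∈ ⋃ i, s i
  · obtain ⟨i, hi⟩ := Set.mem_iUnion.1 hxs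
    exact Or.inl (Set.mem_iUnion.2 ⟨i, hx, hi⟩)
  · exact Or.inr hxs

theorem integral_lt_integral_of_ae_le_of_measure_setOf_lt_ne_zero {f g : α → ℝ}
    (hf : Integrable f μ) (hg : Integrable g μ) (hle : f ≤ᵐ[μ] g)
    (hlt : μ {x | f x < g x} ≠ 0) :
    ∫ x, f x ∂μ < ∫ x, g x ∂μ := by
  rw [← sub_pos, ← integral_sub hg hf,
    integral_pos_iff_support_of_nonneg_ae (hle.mono fun x => sub_nonneg.2) (hg.sub hf)]
  exact pos_iff_ne_zero.2 fun h0 =>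
    hlt (measure_mono_null (fun x hx => (sub_pos.2 hx.out).ne') h0)

variable {f : α → ℝ} {p : ℝ}

theorem Integrable.div_one_add_mul (hf : Integrable f μ) (hf0 : 0 ≤ᵐ[μ] f) (hp : 0 ≤ p) :
    Integrable (fun x => f x / (1 + f x * p)) μ := by
  have hmeas : AEMeasurable (fun x => f x / (1 + f x * p)) μ :=
    hf.aemeasurable.div (aemeasurable_const.add (hf.aemeasurable.mul_const p))
  refine hf.mono' hmeas.aestronglyMeasurable (hf0.mono fun x hx => ?_)
  rw [Real.norm_of_nonneg (div_nonneg hx (add_nonneg zero_le_one (mul_nonneg hx hp)))]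
  exact div_one_add_mul_le_self hx hp

theorem integral_div_one_add_mul_le (hf : Integrable f μ) (hf0 : 0 ≤ᵐ[μ] f) (hp : 0 ≤ p) :
    ∫ x, f x / (1 + f x * p) ∂μ ≤ ∫ x, f x ∂μ :=
  integral_mono_ae (hf.div_one_add_mul hf0 hp) hf
    (hf0.mono fun _ hx => div_one_add_mul_le_self hx hp)

theorem integral_div_one_add_mul_lt (hf : Integrable f μ) (hf0 : 0 ≤ᵐ[μ] f) (hp : 0 < p)
    (hpos : μ {x | 0 < f x} ≠ 0) :
    ∫ x, f x / (1 + f x * p) ∂μ < ∫ x, f x ∂μ :=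
  integral_lt_integral_of_ae_le_of_measure_setOf_lt_ne_zero (hf.div_one_add_mul hf0 hp.le) hf
    (hf0.mono fun _ hx => div_one_add_mul_le_self hx hp.le)
    fun h0 => hpos (measure_mono_null (fun _ hx => div_one_add_mul_lt_self hx hp) h0)

end MeasureTheory

theorem all_positive_powers_imp_lam_add_mu_lt_one_general
    (P : Measure (ℝ≥0 × ℝ≥0)) [IsProbabilityMeasure P]
    (hg0mean : ∫ x, (x.1 : ℝ) ∂P = 1)
    (hg1mean : ∫ x, (x.2 : ℝ) ∂P = 1)
    (hg1pos : 0 < P {x : ℝ≥0 × ℝ≥0 | 0 < x.2})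
    (L : ℕ)
    (R : Fin L → Set (ℝ≥0 × ℝ≥0))
    (hmeas : ∀ j, MeasurableSet (R j))
    (hdisj : Pairwise (Function.onFun Disjoint R))
    (hcover : P (⋃ j, R j) = 1)
    (lam mu : ℝ)
    (p : Fin L → ℝ) (hp : ∀ j, 0 < p j)
    (heq : ∀ j, ∫ x in R j, (x.2 : ℝ) / (1 + (x.2 : ℝ) * p j) ∂P =
      ∫ x in R j, (lam + mu * (x.1 : ℝ)) ∂P) :
    lam + mu < 1 := by
  have hg0 : Integrable (fun x : ℝ≥0 × ℝ≥0 => (x.1 : ℝ)) P :=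
    .of_integral_ne_zero (by simp [hg0mean])
  have hg1 : Integrable (fun x : ℝ≥0 × ℝ≥0 => (x.2 : ℝ)) P :=
    .of_integral_ne_zero (by simp [hg1mean])
  have hnull : P (⋃ j, R j)ᶜ = 0 := (prob_compl_eq_zero_iff (.iUnion hmeas)).2 hcover
  have hcost : ∑ j, ∫ x in R j, (lam + mu * (x.1 : ℝ)) ∂P = lam + mu := by
    rw [sum_setIntegral_eq_integral_of_measure_compl_iUnion_eq_zero hmeas hdisj hnull
        (f := fun x => lam + mu * (x.1 : ℝ)) ((integrable_const lam).add (hg0.const_mul mu)),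
      integral_add (integrable_const lam) (hg0.const_mul mu), integral_const_mul, hg0mean]
    simp
  have hgain : ∑ j, ∫ x in R j, (x.2 : ℝ) ∂P = 1 := by
    rw [sum_setIntegral_eq_integral_of_measure_compl_iUnion_eq_zero hmeas hdisj hnull hg1,
      hg1mean]
  obtain ⟨j₀, hj₀⟩ :=
    exists_measure_inter_ne_zero_of_measure_compl_iUnion_eq_zero hnull hg1pos.ne'
  have hg1nonneg : ∀ j, 0 ≤ᵐ[P.restrict (R j)] fun x => (x.2 : ℝ) :=
    fun j => ae_of_all _ fun x => x.2.coe_nonneg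
  calc lam + mu = ∑ j, ∫ x in R j, (x.2 : ℝ) / (1 + (x.2 : ℝ) * p j) ∂P := by
        rw [← hcost]
        exact Finset.sum_congr rfl fun j _ => (heq j).symm
    _ < ∑ j, ∫ x in R j, (x.2 : ℝ) ∂P :=
        Finset.sum_lt_sum
          (fun j _ => integral_div_one_add_mul_le hg1.integrableOn (hg1nonneg j) (hp j).le)
          ⟨j₀, Finset.mem_univ _, integral_div_one_add_mul_lt hg1.integrableOn (hg1nonneg j₀)
            (hp j₀) fun h0 =>
              hj₀ (nonpos_iff_eq_zero.1 (h0 ▸ Measure.le_restrict_apply _ _))⟩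
    _ = 1 := hgain

/-- If all `L` quantized power levels are strictly positive and each satisfies the
centroid optimality equation on its region, then `λ + μ < 1` (contrapositive: if
`λ + μ ≥ 1`, the smallest power level must be zero). Here `g0, g1` have unit mean
and `g1 > 0` with positive probability. -/
theorem all_positive_powers_imp_lam_add_mu_lt_one
    (P : Measure (ℝ≥0 × ℝ≥0)) [IsProbabilityMeasure P]
    (hg0mean : ∫ x, (x.1 : ℝ) ∂P = 1)
    (hg1mean : ∫ x, (x.2 : ℝ) ∂P = 1)
    (hg1pos : 0 < P {x : ℝ≥0 × ℝ≥0 | 0 < x.2})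
    (L : ℕ) (hL : 1 ≤ L)
    (R : Fin L → Set (ℝ≥0 × ℝ≥0))
    (hmeas : ∀ j, MeasurableSet (R j))
    (hdisj : Pairwise (Function.onFun Disjoint R))
    (hcover : P (⋃ j, R j) = 1)
    (lam mu : ℝ) (hlam : 0 ≤ lam) (hmu : 0 ≤ mu)
    (p : Fin L → ℝ) (hp : ∀ j, 0 < p j)
    (heq : ∀ j, ∫ x in R j, (x.2 : ℝ) / (1 + (x.2 : ℝ) * p j) ∂P =
      ∫ x in R j, (lam + mu * (x.1 : ℝ)) ∂P) :
    lam + mu < 1 :=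
  all_positive_powers_imp_lam_add_mu_lt_one_general P hg0mean hg1mean hg1pos L R hmeas hdisj hcover
    lam mu p hp heq
end

section
/- Let P be a measure on ℝ≥0 × ℝ≥0 with coordinates (g0, g1), let R be a measurable set with 0 < P(R) < ∞ and g0 integrable on R, let λ, μ ≥ 0 with λ·P(R) + μ·∫_R g0 dP > 0, and let p > 0 satisfy ∫_R g1/(1 + g1·p) dP = λ·P(R) + μ·∫_R g0 dP. Then p < P(R)/(λ·P(R) + μ·∫_R g0 dP). -/
/-!
Multiplying the optimality equation by `p` turns its left side into the integral over `R` of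
`g₁ p / (1 + g₁ p) = 1 - 1 / (1 + g₁ p)`, a function strictly below `1`; as `0 < P(R) < ∞`, that
integral is strictly below `P(R)`.
-/

open MeasureTheory
open scoped NNReal

namespace MeasureTheory

open scoped ENNReal

variable {α : Type*} [MeasurableSpace α] {μ : Measure α} {s : Set α}

lemma setIntegral_pos_of_forall_pos {f : α → ℝ} (hf : ∀ x, 0 < f x)
    (hfi : IntegrableOn f s μ) (hs : μ s ≠ 0) : 0 < ∫ x in s, f x ∂μ := by
  have hsupp : Function.support f = Set.univ := Set.eq_univ_of_forall fun x => (hf x).ne'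
  rw [setIntegral_pos_iff_support_of_nonneg_ae (.of_forall fun x => (hf x).le) hfi, hsupp,
    Set.univ_inter]
  exact pos_iff_ne_zero.mpr hs

lemma integrableOn_one_div_one_add_mul {g : α → ℝ} (hg : AEMeasurable g (μ.restrict s))
    (hg0 : ∀ x, 0 ≤ g x) {p : ℝ} (hp : 0 ≤ p) (hs : μ s ≠ ∞) :
    IntegrableOn (fun x => 1 / (1 + g x * p)) s μ := by
  refine ⟨(((hg.mul_const p).const_add 1).const_div 1).aestronglyMeasurable,
    .restrict_of_bounded 1 hs.lt_top (.of_forall fun x => ?_)⟩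
  have hgp : 0 ≤ g x * p := mul_nonneg (hg0 x) hp
  rw [Real.norm_of_nonneg (by positivity), div_le_one (by positivity)]
  linarith

lemma mul_setIntegral_div_one_add_mul_lt {g : α → ℝ} (hg : AEMeasurable g (μ.restrict s))
    (hg0 : ∀ x, 0 ≤ g x) {p : ℝ} (hp : 0 < p) (hs0 : μ s ≠ 0) (hs : μ s ≠ ∞) :
    p * ∫ x in s, g x / (1 + g x * p) ∂μ < μ.real s := by
  have hden : ∀ x, 0 < 1 + g x * p := fun x => by nlinarith [hg0 x]
  have hsplit : ∀ x, p * (g x / (1 + g x * p)) = 1 - 1 / (1 + g x * p) := fun x => by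
    rw [mul_div_assoc', eq_sub_iff_add_eq, ← add_div, div_eq_one_iff_eq (hden x).ne']
    ring
  have hint := integrableOn_one_div_one_add_mul hg hg0 hp.le hs
  have hpos : 0 < ∫ x in s, 1 / (1 + g x * p) ∂μ :=
    setIntegral_pos_of_forall_pos (fun x => one_div_pos.mpr (hden x)) hint hs0
  calc p * ∫ x in s, g x / (1 + g x * p) ∂μ
      = ∫ x in s, (1 - 1 / (1 + g x * p)) ∂μ := by
        rw [← integral_const_mul]
        simp only [hsplit]
    _ = μ.real s - ∫ x in s, 1 / (1 + g x * p) ∂μ := by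
        rw [integral_sub (integrableOn_const hs : IntegrableOn (fun _ => (1 : ℝ)) s μ) hint,
          setIntegral_const, smul_eq_mul, mul_one]
    _ < μ.real s := by linarith

end MeasureTheory

theorem power_level_upper_bound_general
    (P : Measure (ℝ≥0 × ℝ≥0))
    (R : Set (ℝ≥0 × ℝ≥0))
    (hRpos : 0 < P R) (hRfin : P R < ⊤)
    (lam mu : ℝ)
    (hden : 0 < lam * (P R).toReal + mu * ∫ x in R, (x.1 : ℝ) ∂P)
    (p : ℝ) (hp : 0 < p)
    (heq : ∫ x in R, (x.2 : ℝ) / (1 + (x.2 : ℝ) * p) ∂P =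
      lam * (P R).toReal + mu * ∫ x in R, (x.1 : ℝ) ∂P) :
    p < (P R).toReal / (lam * (P R).toReal + mu * ∫ x in R, (x.1 : ℝ) ∂P) := by
  have hg : AEMeasurable (fun x : ℝ≥0 × ℝ≥0 => (x.2 : ℝ)) (P.restrict R) := by fun_prop
  have hlt := mul_setIntegral_div_one_add_mul_lt hg (fun x => x.2.coe_nonneg) hp hRpos.ne'
    hRfin.ne
  rw [heq, measureReal_def] at hlt
  exact (lt_div_iff₀ hden).mpr hlt

/-- A strictly positive power level satisfying the centroid optimality equation on a
region `R` is bounded above by `P(R)/(λ P(R) + μ ∫_R g0)`. -/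
theorem power_level_upper_bound
    (P : Measure (ℝ≥0 × ℝ≥0))
    (R : Set (ℝ≥0 × ℝ≥0)) (hRmeas : MeasurableSet R)
    (hRpos : 0 < P R) (hRfin : P R < ⊤)
    (hg0int : IntegrableOn (fun x => (x.1 : ℝ)) R P)
    (lam mu : ℝ) (hlam : 0 ≤ lam) (hmu : 0 ≤ mu)
    (hden : 0 < lam * (P R).toReal + mu * ∫ x in R, (x.1 : ℝ) ∂P)
    (p : ℝ) (hp : 0 < p)
    (heq : ∫ x in R, (x.2 : ℝ) / (1 + (x.2 : ℝ) * p) ∂P =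
      lam * (P R).toReal + mu * ∫ x in R, (x.1 : ℝ) ∂P) :
    p < (P R).toReal / (lam * (P R).toReal + mu * ∫ x in R, (x.1 : ℝ) ∂P) :=
  power_level_upper_bound_general P R hRpos hRfin lam mu hden p hp heq
end
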